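/- Let Z be a central charge on an abelian category 𝒜 with the Harder–Narasimhan property. Then the Harder–Narasimhan filtration of a nonzero object E is unique: if 0 = E₀ ⊂ ⋯ ⊂ Eₙ = E and 0 = E'₀ ⊂ ⋯ ⊂ E'ₘ = E are two filtrations with semistable quotients of strictly decreasing phases, then n = m and Eᵢ = E'ᵢ for all i. -/

import Mathlib

open CategoryTheory Limits

namespace Stmt19

variable {C : Type*} [Category C] [Abelian C]

/-- A central charge (stability function): additive on short exact sequences (equivalently a
group homomorphism `K₀(𝒜) → ℂ`), sending every nonzero object into the semiclosed upper half
plane `{r e^{iπφ} : r > 0, 0 < φ ≤ 1}`. -/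
structure CentralCharge (C : Type*) [Category C] [Abelian C] where
  Z : C → ℂ
  additive : ∀ S : ShortComplex C, S.ShortExact → Z S.X₂ = Z S.X₁ + Z S.X₃
  upper_half : ∀ X : C, ¬ IsZero X → 0 < (Z X).arg ∧ (Z X).arg ≤ Real.pi

/-- The phase `φ(E) ∈ (0,1]` of a nonzero object. -/
noncomputable def CentralCharge.phase (Z : CentralCharge C) (X : C) : ℝ :=
  (Z.Z X).arg / Real.pi

/-- `E` is `Z`-semistable if it is nonzero and every nonzero subobject has phase `≤ φ(E)`. -/
def CentralCharge.Semistable (Z : CentralCharge C) (E : C) : Prop :=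
  ¬ IsZero E ∧ ∀ F : Subobject E, F ≠ ⊥ → Z.phase (F : C) ≤ Z.phase E

/-- The subquotient `F j.succ / F j.castSucc` of a monotone chain of subobjects. -/
noncomputable def quotObj {E : C} {n : ℕ} (F : Fin (n + 1) → Subobject E)
    (hF : Monotone F) (j : Fin n) : C :=
  cokernel (Subobject.ofLE (F j.castSucc) (F j.succ) (hF (Fin.castSucc_lt_succ : j.castSucc < j.succ).le))

/-- `F` is a Harder–Narasimhan filtration of `E`: a finite chain `0 = E₀ ⊆ ⋯ ⊆ Eₙ = E` of
subobjects with `Z`-semistable successive quotients of strictly decreasing phases. -/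
def IsHNFiltration (Z : CentralCharge C) {E : C} {n : ℕ}
    (F : Fin (n + 1) → Subobject E) (hF : Monotone F) : Prop :=
  F 0 = ⊥ ∧ F (Fin.last n) = ⊤ ∧
    (∀ j : Fin n, Z.Semistable (quotObj F hF j)) ∧
    (∀ j k : Fin n, j < k → Z.phase (quotObj F hF k) < Z.phase (quotObj F hF j))


/-- cross product characterization of arg comparison in the semiclosed upper half plane. -/
lemma arg_le_arg_iff {z w : ℂ} (hz : 0 < z.arg) (hw : 0 < w.arg) :
    z.arg ≤ w.arg ↔ 0 ≤ z.re * w.im - w.re * z.im := by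
  have hz0 : z ≠ 0 := by rintro rfl; simp at hz
  have hw0 : w ≠ 0 := by rintro rfl; simp at hw
  have haz : (0:ℝ) < ‖z‖ := norm_pos_iff.mpr hz0
  have haw : (0:ℝ) < ‖w‖ := norm_pos_iff.mpr hw0
  have key : z.re * w.im - w.re * z.im
      = ‖z‖ * ‖w‖ * Real.sin (w.arg - z.arg) := by
    rw [Real.sin_sub, Complex.sin_arg, Complex.sin_arg, Complex.cos_arg hz0,
      Complex.cos_arg hw0]
    field_simp
  rw [key]
  have hzpi := Complex.arg_le_pi z
  have hwpi := Complex.arg_le_pi w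
  constructor
  · intro h
    have : 0 ≤ Real.sin (w.arg - z.arg) :=
      Real.sin_nonneg_of_nonneg_of_le_pi (by linarith) (by linarith)
    positivity
  · intro h
    by_contra hlt
    push_neg at hlt
    have h1 : 0 < Real.sin (z.arg - w.arg) :=
      Real.sin_pos_of_pos_of_lt_pi (by linarith) (by linarith)
    have h2 : Real.sin (w.arg - z.arg) < 0 := by
      rw [show w.arg - z.arg = -(z.arg - w.arg) by ring, Real.sin_neg]; linarith
    nlinarith [mul_pos haz haw]

lemma seesaw {x y : ℂ} (hx : 0 < x.arg) (hy : 0 < y.arg) (hxy : 0 < (x + y).arg)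
    (h : x.arg ≤ (x + y).arg) : (x + y).arg ≤ y.arg := by
  rw [arg_le_arg_iff hx hxy] at h
  rw [arg_le_arg_iff hxy hy]
  simp only [Complex.add_re, Complex.add_im] at h ⊢
  nlinarith [h]


lemma Z_eq_zero (Z : CentralCharge C) {X : C} (hX : IsZero X) : Z.Z X = 0 := by
  have hse : (ShortComplex.mk (𝟙 X) (𝟙 X) (hX.eq_of_src _ _)).ShortExact :=
    { exact := ShortComplex.exact_of_isZero_X₂ _ hX
      mono_f := by dsimp; infer_instance
      epi_g := by dsimp; infer_instance }
  have h := Z.additive _ hse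
  dsimp at h
  exact left_eq_add.mp h

open ZeroObject in
lemma Z_iso (Z : CentralCharge C) {X Y : C} (e : X ≅ Y) : Z.Z X = Z.Z Y := by
  have hz : IsZero (0 : C) := isZero_zero C
  have hse : (ShortComplex.mk e.hom (0 : Y ⟶ (0 : C)) (by simp)).ShortExact :=
    { exact := by
        rw [ShortComplex.exact_iff_epi _ rfl]
        dsimp; infer_instance
      mono_f := by dsimp; infer_instance
      epi_g := by
        dsimp
        constructor
        intro W u v _
        exact hz.eq_of_src u v }
  have h := Z.additive _ hse
  dsimp at h
  rw [h, Z_eq_zero Z hz, add_zero]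

lemma phase_iso (Z : CentralCharge C) {X Y : C} (e : X ≅ Y) : Z.phase X = Z.phase Y := by
  unfold CentralCharge.phase; rw [Z_iso Z e]

lemma isZero_bot {E : C} : IsZero (((⊥ : Subobject E) : C)) :=
  (isZero_zero C).of_iso Subobject.botCoeIsoZero

lemma eq_bot_of_isZero {E : C} (P : Subobject E) (h : IsZero (P : C)) : P = ⊥ :=
  le_bot_iff.mp (Subobject.le_of_comm 0 (by rw [zero_comp, h.eq_of_src P.arrow 0]))

lemma not_isZero_of_ne_bot {E : C} {P : Subobject E} (h : P ≠ ⊥) : ¬ IsZero (P : C) :=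
  fun hz => h (eq_bot_of_isZero P hz)

lemma mk_ne_bot_of_not_isZero {X E : C} (i : X ⟶ E) [Mono i] (hX : ¬ IsZero X) :
    Subobject.mk i ≠ ⊥ := by
  intro h
  apply hX
  have hz : IsZero ((Subobject.mk i : Subobject E) : C) := by
    rw [h]; exact isZero_bot
  exact hz.of_iso (Subobject.underlyingIso i).symm

lemma phase_le_of_mono (Z : CentralCharge C) {A X : C} (hA : Z.Semistable A) (i : X ⟶ A)
    [Mono i] (hX : ¬ IsZero X) : Z.phase X ≤ Z.phase A := by
  have h1 : Subobject.mk i ≠ ⊥ := mk_ne_bot_of_not_isZero i hX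
  have h2 := hA.2 _ h1
  rwa [phase_iso Z (Subobject.underlyingIso i)] at h2

/-- The short exact sequence `0 → ker f → A → im f → 0`. -/
lemma ses_kernel_image {A B : C} (f : A ⟶ B) :
    (ShortComplex.mk (kernel.ι f) (factorThruImage f)
      (by rw [← cancel_mono (image.ι f)]; simp)).ShortExact :=
  { exact := ShortComplex.exact_of_f_is_kernel _ (KernelFork.IsLimit.ofι' _ _
      (fun k hk => ⟨kernel.lift f k (by rw [← image.fac f, ← Category.assoc, hk, zero_comp]),
        kernel.lift_ι f k _⟩))
    mono_f := by dsimp; infer_instance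
    epi_g := by dsimp; infer_instance }

lemma pi_pos' : (0:ℝ) < Real.pi := Real.pi_pos

lemma phase_lt_phase_iff (Z : CentralCharge C) {X Y : C} :
    Z.phase X < Z.phase Y ↔ (Z.Z X).arg < (Z.Z Y).arg := by
  unfold CentralCharge.phase
  rw [div_lt_div_iff_of_pos_right Real.pi_pos]

lemma phase_le_phase_iff (Z : CentralCharge C) {X Y : C} :
    Z.phase X ≤ Z.phase Y ↔ (Z.Z X).arg ≤ (Z.Z Y).arg := by
  unfold CentralCharge.phase
  rw [div_le_div_iff_of_pos_right Real.pi_pos]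

/-- Hom vanishing: no nonzero maps from a semistable of bigger phase to one of smaller phase. -/
lemma hom_vanish (Z : CentralCharge C) {A B : C} (hA : Z.Semistable A) (hB : Z.Semistable B)
    (h : Z.phase B < Z.phase A) (f : A ⟶ B) : f = 0 := by
  by_contra hf
  have hI : ¬ IsZero (image f) := by
    intro hz
    exact hf (by rw [← image.fac f, hz.eq_of_src (image.ι f) 0, comp_zero])
  -- the image is a subobject of B
  have h1 : Z.phase (image f) ≤ Z.phase B := phase_le_of_mono Z hB (image.ι f) hI
  -- the phase of A is at most that of its quotient `image f`
  have h2 : Z.phase A ≤ Z.phase (image f) := by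
    have hadd := Z.additive _ (ses_kernel_image f)
    dsimp at hadd
    have hAnz := hA.1
    by_cases hK : IsZero (kernel f)
    · rw [Z_eq_zero Z hK, zero_add] at hadd
      unfold CentralCharge.phase
      rw [hadd]
    · -- seesaw
      have hK' : Z.phase (kernel f) ≤ Z.phase A :=
        phase_le_of_mono Z hA (kernel.ι f) hK
      rw [phase_le_phase_iff] at hK' ⊢
      have hargK := (Z.upper_half _ hK).1
      have hargA := (Z.upper_half _ hAnz).1
      have hargI := (Z.upper_half _ hI).1
      rw [hadd] at hargA hK' ⊢
      exact seesaw hargK hargI hargA hK'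
  rw [phase_lt_phase_iff] at h
  rw [phase_le_phase_iff] at h1 h2
  linarith

lemma isZero_of_epi_zero {X Y : C} (f : X ⟶ Y) [Epi f] (h : f = 0) : IsZero Y := by
  rw [IsZero.iff_id_eq_zero]
  exact (cancel_epi f).mp (by rw [h]; simp)

section Chain

variable {E X : C} {N : ℕ}

lemma chain_zero (F : Fin (N + 1) → Subobject E) (hF : Monotone F) (h0 : F 0 = ⊥)
    (f : E ⟶ X) (k : Fin (N + 1))
    (hq : ∀ j : Fin N, (j.succ : Fin (N + 1)) ≤ k → ∀ g : quotObj F hF j ⟶ X, g = 0) :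
    (F k).arrow ≫ f = 0 := by
  induction k using Fin.induction with
  | zero => rw [h0, Subobject.bot_arrow, zero_comp]
  | succ k ih =>
    have hk : (F k.castSucc).arrow ≫ f = 0 :=
      ih (fun j hj g => hq j (hj.trans (Fin.castSucc_lt_succ : k.castSucc < k.succ).le) g)
    have hzero : Subobject.ofLE (F k.castSucc) (F k.succ) (hF (Fin.castSucc_lt_succ : k.castSucc < k.succ).le) ≫
        ((F k.succ).arrow ≫ f) = 0 := by
      rw [← Category.assoc, Subobject.ofLE_arrow, hk]
    have hfac : (F k.succ).arrow ≫ f = cokernel.π _ ≫ cokernel.desc _ _ hzero :=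
      (cokernel.π_desc _ _ _).symm
    rw [hfac, hq k le_rfl (cokernel.desc _ _ hzero)]; exact comp_zero

lemma hom_zero_of_quots (F : Fin (N + 1) → Subobject E) (hF : Monotone F) (h0 : F 0 = ⊥)
    (htop : F (Fin.last N) = ⊤) (f : E ⟶ X)
    (hq : ∀ j : Fin N, ∀ g : quotObj F hF j ⟶ X, g = 0) : f = 0 := by
  have h := chain_zero F hF h0 f (Fin.last N) (fun j _ g => hq j g)
  rw [htop] at h
  haveI : IsIso (⊤ : Subobject E).arrow := inferInstance
  calc f = inv (⊤ : Subobject E).arrow ≫ ((⊤ : Subobject E).arrow ≫ f) := by simp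
    _ = 0 := by rw [h, comp_zero]

end Chain

section Pi

variable {E : C} {W T : Subobject E}

/-- The projection `E ⟶ T/W` when `T = ⊤`. -/
noncomputable def quotPi (h : W ≤ T) (htop : T = ⊤) : E ⟶ cokernel (Subobject.ofLE W T h) :=
  haveI : IsIso T.arrow := by rw [htop]; infer_instance
  inv T.arrow ≫ cokernel.π _

instance epi_quotPi (h : W ≤ T) (htop : T = ⊤) : Epi (quotPi h htop) := by
  unfold quotPi
  haveI : IsIso T.arrow := by rw [htop]; infer_instance
  apply epi_comp

lemma comp_quotPi_zero (h : W ≤ T) (htop : T = ⊤) {Q : Subobject E} (hle : Q ≤ W) :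
    Q.arrow ≫ quotPi h htop = 0 := by
  haveI : IsIso T.arrow := by rw [htop]; infer_instance
  have h1 : Q.arrow ≫ inv T.arrow = Subobject.ofLE Q T (hle.trans h) := by
    rw [IsIso.comp_inv_eq, Subobject.ofLE_arrow]
  unfold quotPi
  rw [← Category.assoc, h1, ← Subobject.ofLE_comp_ofLE Q W T hle h, Category.assoc,
    cokernel.condition, comp_zero]

lemma le_of_comp_quotPi_zero (h : W ≤ T) (htop : T = ⊤) {Q : Subobject E}
    (hz : Q.arrow ≫ quotPi h htop = 0) : Q ≤ W := by
  haveI : IsIso T.arrow := by rw [htop]; infer_instance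
  have hz' : (Q.arrow ≫ inv T.arrow) ≫ cokernel.π (Subobject.ofLE W T h) = 0 := by
    rw [Category.assoc]; exact hz
  refine Subobject.le_of_comm (Abelian.monoLift (Subobject.ofLE W T h) _ hz') ?_
  have := Abelian.monoLift_comp (Subobject.ofLE W T h) _ hz'
  calc Abelian.monoLift (Subobject.ofLE W T h) _ hz' ≫ W.arrow
      = Abelian.monoLift (Subobject.ofLE W T h) _ hz' ≫ Subobject.ofLE W T h ≫ T.arrow := by
        rw [Subobject.ofLE_arrow]
    _ = (Q.arrow ≫ inv T.arrow) ≫ T.arrow := by rw [← Category.assoc, this]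
    _ = Q.arrow := by simp

end Pi

set_option linter.unusedSectionVars false

section Res

variable {E : C} {P : Subobject E}

/-- View a subobject `Q ≤ P` of `E` as a subobject of the object underlying `P`. -/
noncomputable def res (P : Subobject E) (Q : Subobject E) (h : Q ≤ P) : Subobject (P : C) :=
  Subobject.mk (Subobject.ofLE Q P h)

noncomputable def resIso (Q : Subobject E) (h : Q ≤ P) : ((res P Q h : Subobject (P : C)) : C) ≅ (Q : C) :=
  Subobject.underlyingIso _

lemma res_arrow (Q : Subobject E) (h : Q ≤ P) :
    (resIso Q h).hom ≫ Subobject.ofLE Q P h = (res P Q h).arrow :=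
  Subobject.underlyingIso_hom_comp_eq_mk _

lemma res_mono {Q Q' : Subobject E} (hq : Q ≤ Q') (h : Q ≤ P) (h' : Q' ≤ P) :
    res P Q h ≤ res P Q' h' :=
  Subobject.mk_le_mk_of_comm (Subobject.ofLE Q Q' hq) (Subobject.ofLE_comp_ofLE Q Q' P hq h')

lemma le_of_res_le {Q Q' : Subobject E} (h : Q ≤ P) (h' : Q' ≤ P)
    (hres : res P Q h ≤ res P Q' h') : Q ≤ Q' := by
  refine Subobject.le_of_comm
    ((resIso Q h).inv ≫ Subobject.ofLE _ _ hres ≫ (resIso Q' h').hom) ?_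
  have key : ((resIso Q h).inv ≫ Subobject.ofLE _ _ hres ≫ (resIso Q' h').hom) ≫
      Subobject.ofLE Q' P h' = Subobject.ofLE Q P h := by
    simp only [Category.assoc]
    rw [res_arrow Q' h', Subobject.ofLE_arrow, ← res_arrow Q h, Iso.inv_hom_id_assoc]
  calc ((resIso Q h).inv ≫ Subobject.ofLE _ _ hres ≫ (resIso Q' h').hom) ≫ Q'.arrow
      = ((resIso Q h).inv ≫ Subobject.ofLE _ _ hres ≫ (resIso Q' h').hom) ≫
          Subobject.ofLE Q' P h' ≫ P.arrow := by rw [Subobject.ofLE_arrow]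
    _ = Subobject.ofLE Q P h ≫ P.arrow := by rw [← Category.assoc, key]
    _ = Q.arrow := Subobject.ofLE_arrow _

lemma res_inj {Q Q' : Subobject E} (h : Q ≤ P) (h' : Q' ≤ P)
    (heq : res P Q h = res P Q' h') : Q = Q' :=
  le_antisymm (le_of_res_le h h' heq.le) (le_of_res_le h' h heq.ge)

lemma res_eq_bot {Q : Subobject E} (h : Q ≤ P) (hQ : Q = ⊥) : res P Q h = ⊥ := by
  subst hQ
  exact eq_bot_of_isZero _ (isZero_bot.of_iso (resIso ⊥ h))

lemma res_eq_top {Q : Subobject E} (h : Q ≤ P) (hQ : Q = P) : res P Q h = ⊤ := by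
  subst hQ
  haveI : IsIso (Subobject.ofLE Q Q h) := by
    rw [show h = le_rfl from rfl, Subobject.ofLE_refl]
    infer_instance
  exact Subobject.mk_eq_top_of_isIso _

lemma res_ne_bot {Q : Subobject E} (h : Q ≤ P) (hQ : Q ≠ ⊥) : res P Q h ≠ ⊥ := by
  intro hc
  apply hQ
  apply eq_bot_of_isZero
  have hz : IsZero ((res P Q h : Subobject (P : C)) : C) := by rw [hc]; exact isZero_bot
  exact hz.of_iso (resIso Q h).symm

/-- The quotient of restricted subobjects is isomorphic to the original quotient. -/
noncomputable def resQuotIso {Q Q' : Subobject E} (hq : Q ≤ Q') (h : Q ≤ P) (h' : Q' ≤ P) :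
    cokernel (Subobject.ofLE (res P Q h) (res P Q' h') (res_mono hq h h')) ≅
      cokernel (Subobject.ofLE Q Q' hq) := by
  refine cokernel.mapIso _ _ (resIso Q h) (resIso Q' h') ?_
  rw [← cancel_mono (Subobject.ofLE Q' P h')]
  simp only [Category.assoc]
  rw [res_arrow Q' h', Subobject.ofLE_arrow, Subobject.ofLE_comp_ofLE, res_arrow Q h]

end Res

lemma semistable_of_iso (Z : CentralCharge C) {X Y : C} (e : X ≅ Y) (h : Z.Semistable X) :
    Z.Semistable Y := by
  refine ⟨fun hz => h.1 (hz.of_iso e), ?_⟩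
  intro Fs hFs
  have h1 : ¬ IsZero ((Fs : Subobject Y) : C) := not_isZero_of_ne_bot hFs
  have h2 := phase_le_of_mono Z h (Fs.arrow ≫ e.inv) h1
  rwa [phase_iso Z e] at h2

lemma isIso_ofLE_of_eq {E : C} {Q Q' : Subobject E} (h : Q = Q') (hle : Q ≤ Q') :
    IsIso (Subobject.ofLE Q Q' hle) := by
  subst h
  rw [Subobject.ofLE_refl]
  infer_instance

section Main

variable (Z : CentralCharge C) {E : C}

lemma last_phase_not_lt {n' m' : ℕ}
    (F : Fin (n' + 2) → Subobject E) (hF : Monotone F)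
    (G : Fin (m' + 2) → Subobject E) (hG : Monotone G)
    (hFhn : IsHNFiltration Z F hF) (hGhn : IsHNFiltration Z G hG) :
    ¬ Z.phase (quotObj F hF (Fin.last n')) < Z.phase (quotObj G hG (Fin.last m')) := by
  intro hlt
  obtain ⟨hF0, hFtop, hFss, hFdec⟩ := hFhn
  obtain ⟨hG0, hGtop, hGss, hGdec⟩ := hGhn
  have hT : F ((Fin.last n').succ) = ⊤ := by rw [Fin.succ_last]; exact hFtop
  have hle := hF (Fin.castSucc_lt_succ : (Fin.last n').castSucc < (Fin.last n').succ).le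
  set π : E ⟶ quotObj F hF (Fin.last n') := quotPi hle hT with hπdef
  haveI : Epi π := epi_quotPi hle hT
  have hzero : π = 0 := by
    apply hom_zero_of_quots G hG hG0 hGtop
    intro j g
    apply hom_vanish Z (hGss j) (hFss (Fin.last n'))
    rcases eq_or_lt_of_le (Fin.le_last j) with hj | hj
    · rw [hj]; exact hlt
    · exact hlt.trans (hGdec j (Fin.last m') hj)
  exact (hFss (Fin.last n')).1 (isZero_of_epi_zero π hzero)

lemma last_phase_eq {n' m' : ℕ}
    (F : Fin (n' + 2) → Subobject E) (hF : Monotone F)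
    (G : Fin (m' + 2) → Subobject E) (hG : Monotone G)
    (hFhn : IsHNFiltration Z F hF) (hGhn : IsHNFiltration Z G hG) :
    Z.phase (quotObj F hF (Fin.last n')) = Z.phase (quotObj G hG (Fin.last m')) :=
  le_antisymm (not_lt.mp (last_phase_not_lt Z G hG F hF hGhn hFhn))
    (not_lt.mp (last_phase_not_lt Z F hF G hG hFhn hGhn))

lemma penult_le {n' m' : ℕ}
    (F : Fin (n' + 2) → Subobject E) (hF : Monotone F)
    (G : Fin (m' + 2) → Subobject E) (hG : Monotone G)
    (hFhn : IsHNFiltration Z F hF) (hGhn : IsHNFiltration Z G hG) :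
    F ((Fin.last n').castSucc) ≤ G ((Fin.last m').castSucc) := by
  have hphase := last_phase_eq Z F hF G hG hFhn hGhn
  have hT : G ((Fin.last m').succ) = ⊤ := by rw [Fin.succ_last]; exact hGhn.2.1
  have hle := hG (Fin.castSucc_lt_succ : (Fin.last m').castSucc < (Fin.last m').succ).le
  have hz : (F ((Fin.last n').castSucc)).arrow ≫ quotPi hle hT = 0 := by
    apply chain_zero F hF hFhn.1 _ ((Fin.last n').castSucc)
    intro j hj g
    have hjlt : j < Fin.last n' := by
      rw [Fin.lt_def, Fin.val_last]
      rw [Fin.le_def] at hj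
      simpa using hj
    apply hom_vanish Z (hFhn.2.2.1 j) (hGhn.2.2.1 (Fin.last m'))
    rw [← hphase]
    exact hFhn.2.2.2 j (Fin.last n') hjlt
  exact le_of_comp_quotPi_zero hle hT hz

lemma penult_eq_bot {N : ℕ} (F : Fin (N + 2) → Subobject E) (hF : Monotone F)
    (h0 : F 0 = ⊥) (hss : ∀ j : Fin (N + 1), Z.Semistable (quotObj F hF j))
    (hbot : F ((Fin.last N).castSucc) = ⊥) : N = 0 := by
  by_contra hne
  have h1le : (Fin.succ 0 : Fin (N + 2)) ≤ (Fin.last N).castSucc := by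
    rw [Fin.le_def]
    simp
    omega
  have hF1 : F (Fin.succ 0) = ⊥ := le_bot_iff.mp (hbot ▸ hF h1le)
  have heq : F (Fin.castSucc (0 : Fin (N + 1))) = F (Fin.succ 0) := by
    rw [Fin.castSucc_zero, h0, hF1]
  haveI := isIso_ofLE_of_eq heq (hF (Fin.castSucc_lt_succ : (0 : Fin (N + 1)).castSucc < (0 : Fin (N + 1)).succ).le)
  have hzq : IsZero (quotObj F hF 0) := by
    haveI : Epi (cokernel.π (Subobject.ofLE (F (Fin.castSucc (0 : Fin (N + 1)))) (F (Fin.succ 0))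
      (hF (Fin.castSucc_lt_succ : (0 : Fin (N + 1)).castSucc < (0 : Fin (N + 1)).succ).le))) :=
      coequalizer.π_epi
    exact @isZero_of_epi_zero _ _ _ _ _ _ this (cokernel.π_of_epi _)
  exact (hss 0).1 hzq

end Main

lemma fin_cast_id {N : ℕ} : ∀ (hh : N = N) (j : Fin N), Fin.cast hh j = j :=
  fun _ _ => Fin.ext rfl

theorem aux (Z : CentralCharge C) : ∀ (n : ℕ) (E : C), ¬ IsZero E → ∀ (m : ℕ)
    (F : Fin (n + 1) → Subobject E) (hF : Monotone F)
    (G : Fin (m + 1) → Subobject E) (hG : Monotone G),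
    IsHNFiltration Z F hF → IsHNFiltration Z G hG →
    ∃ h : n = m, ∀ i : Fin (n + 1), F i = G (Fin.cast (by rw [h]) i) := by
  intro n
  induction n with
  | zero =>
    intro E hE m F hF G hG hFhn hGhn
    exfalso
    apply hE
    have hlast : (Fin.last 0 : Fin 1) = 0 := by decide
    have hbt : (⊥ : Subobject E) = ⊤ := by
      rw [← hFhn.1, ← hlast]
      exact hFhn.2.1
    have hzt : IsZero ((⊤ : Subobject E) : C) := by rw [← hbt]; exact isZero_bot
    exact hzt.of_iso (asIso (⊤ : Subobject E).arrow).symm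
  | succ n' ih =>
    intro E hE m F hF G hG hFhn hGhn
    revert G hG hGhn
    cases m with
    | zero =>
      intro G hG hGhn
      exfalso
      apply hE
      have hlast : (Fin.last 0 : Fin 1) = 0 := by decide
      have hbt : (⊥ : Subobject E) = ⊤ := by
        rw [← hGhn.1, ← hlast]
        exact hGhn.2.1
      have hzt : IsZero ((⊤ : Subobject E) : C) := by rw [← hbt]; exact isZero_bot
      exact hzt.of_iso (asIso (⊤ : Subobject E).arrow).symm
    | succ m'' =>
      intro G hG hGhn
      have hWeq : F ((Fin.last n').castSucc) = G ((Fin.last m'').castSucc) :=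
        le_antisymm (penult_le Z F hF G hG hFhn hGhn) (penult_le Z G hG F hF hGhn hFhn)
      by_cases hPbot : F ((Fin.last n').castSucc) = ⊥
      · have hn0 : n' = 0 := penult_eq_bot Z F hF hFhn.1 hFhn.2.2.1 hPbot
        have hm0 : m'' = 0 := penult_eq_bot Z G hG hGhn.1 hGhn.2.2.1 (hWeq ▸ hPbot)
        subst hn0; subst hm0
        refine ⟨rfl, ?_⟩
        intro i
        rw [fin_cast_id]
        rcases i with ⟨iv, hiv⟩
        interval_cases iv
        · exact hFhn.1.trans hGhn.1.symm
        · exact hFhn.2.1.trans hGhn.2.1.symm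
      · have hPne : ¬ IsZero ((F ((Fin.last n').castSucc) : Subobject E) : C) :=
          not_isZero_of_ne_bot hPbot
        set P := F ((Fin.last n').castSucc) with hPdef
        have hFle : ∀ i : Fin (n' + 1), F i.castSucc ≤ P :=
          fun i => hF (Fin.castSucc_le_castSucc_iff.mpr (Fin.le_last i))
        have hGle : ∀ i : Fin (m'' + 1), G i.castSucc ≤ P := fun i =>
          le_of_le_of_eq (hG (Fin.castSucc_le_castSucc_iff.mpr (Fin.le_last i))) hWeq.symm
        set F' : Fin (n' + 1) → Subobject (P : C) :=
          fun i => res P (F i.castSucc) (hFle i) with hF'def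
        set G' : Fin (m'' + 1) → Subobject (P : C) :=
          fun i => res P (G i.castSucc) (hGle i) with hG'def
        have hF'm : Monotone F' := fun a b hab =>
          res_mono (hF (Fin.castSucc_le_castSucc_iff.mpr hab)) _ _
        have hG'm : Monotone G' := fun a b hab =>
          res_mono (hG (Fin.castSucc_le_castSucc_iff.mpr hab)) _ _
        have eF : ∀ j : Fin n', quotObj F' hF'm j ≅ quotObj F hF j.castSucc := fun j =>
          resQuotIso (hF (Fin.castSucc_le_castSucc_iff.mpr (Fin.castSucc_lt_succ : j.castSucc < j.succ).le))
            (hFle j.castSucc) (hFle j.succ)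
        have eG : ∀ j : Fin m'', quotObj G' hG'm j ≅ quotObj G hG j.castSucc := fun j =>
          resQuotIso (hG (Fin.castSucc_le_castSucc_iff.mpr (Fin.castSucc_lt_succ : j.castSucc < j.succ).le))
            (hGle j.castSucc) (hGle j.succ)
        have hF'hn : IsHNFiltration Z F' hF'm := by
          refine ⟨?_, ?_, ?_, ?_⟩
          · exact res_eq_bot (hFle 0) (by rw [Fin.castSucc_zero]; exact hFhn.1)
          · exact res_eq_top (hFle (Fin.last n')) hPdef.symm
          · intro j
            exact semistable_of_iso Z (eF j).symm (hFhn.2.2.1 j.castSucc)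
          · intro j k hjk
            rw [phase_iso Z (eF k), phase_iso Z (eF j)]
            exact hFhn.2.2.2 j.castSucc k.castSucc (Fin.castSucc_lt_castSucc_iff.mpr hjk)
        have hG'hn : IsHNFiltration Z G' hG'm := by
          refine ⟨?_, ?_, ?_, ?_⟩
          · exact res_eq_bot (hGle 0) (by rw [Fin.castSucc_zero]; exact hGhn.1)
          · exact res_eq_top (hGle (Fin.last m'')) (hWeq.symm.trans hPdef.symm)
          · intro j
            exact semistable_of_iso Z (eG j).symm (hGhn.2.2.1 j.castSucc)
          · intro j k hjk
            rw [phase_iso Z (eG k), phase_iso Z (eG j)]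
            exact hGhn.2.2.2 j.castSucc k.castSucc (Fin.castSucc_lt_castSucc_iff.mpr hjk)
        obtain ⟨hnm, hpt⟩ := ih (P : C) hPne m'' F' hF'm G' hG'm hF'hn hG'hn
        subst hnm
        refine ⟨rfl, ?_⟩
        intro i
        rw [fin_cast_id]
        induction i using Fin.lastCases with
        | last => exact hFhn.2.1.trans hGhn.2.1.symm
        | cast j =>
          have h := hpt j
          rw [fin_cast_id] at h
          rw [hF'def, hG'def] at h
          exact res_inj (hFle j) (hGle j) h

/-- Harder–Narasimhan filtrations are unique: any two filtrations of a nonzero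
object `E` with semistable quotients of strictly decreasing phases have the same length and
agree term by term. -/
theorem hn_filtration_unique (Z : CentralCharge C) (E : C) (hE : ¬ IsZero E)
    {n m : ℕ} (F : Fin (n + 1) → Subobject E) (hF : Monotone F)
    (G : Fin (m + 1) → Subobject E) (hG : Monotone G)
    (hFhn : IsHNFiltration Z F hF) (hGhn : IsHNFiltration Z G hG) :
    ∃ h : n = m, ∀ i : Fin (n + 1), F i = G (Fin.cast (by rw [h]) i) := by
  exact aux Z n E hE m F hF G hG hFhn hGhn

end Stmt19
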